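/- arXiv:2410.02034 — 2 statements merged into one kernel-verified Lean document; each statement's English description precedes it below -/
import Mathlib

section
/- Let A be a primitive J(α,β)-axial algebra satisfying the (⋆) condition, and let (·,·) be the unique Frobenius form on A with (c,c) = 1 for every primitive axis c. Then A is baric, i.e. there exists an F-algebra homomorphism w : A → F with w(c) = 1 for every primitive axis c ∈ A, if and only if (c,d) = 1 for all primitive axes c, d ∈ A. -/
variable (F : Type*) [Field F] (A : Type*) [NonUnitalNonAssocCommRing A]
  [Module F A] [SMulCommClass F A A] [IsScalarTower F A A]

/-- The `l`-eigenspace of the left multiplication operator `ad_a`. -/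
def eigSp (a : A) (l : F) : Submodule F A where
  carrier := {x | a * x = l • x}
  add_mem' := by
    intro x y hx hy
    simp only [Set.mem_setOf_eq] at *
    rw [mul_add, hx, hy, smul_add]
  zero_mem' := by simp
  smul_mem' := by
    intro c x hx
    simp only [Set.mem_setOf_eq] at *
    rw [mul_smul_comm, hx, smul_comm]

/-- `a` is a `J(α,β)`-axis: an idempotent whose adjoint is semisimple with
eigenvalues among `1, α, β`, satisfying the fusion law `J(α,β)`. -/
structure IsJAxis (α β : F) (a : A) : Prop where
  idem : a * a = a
  decomp : eigSp F A a 1 ⊔ eigSp F A a α ⊔ eigSp F A a β = ⊤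
  f11 : ∀ x ∈ eigSp F A a 1, ∀ y ∈ eigSp F A a 1, x * y ∈ eigSp F A a 1
  f1a : ∀ x ∈ eigSp F A a 1, ∀ y ∈ eigSp F A a α, x * y ∈ eigSp F A a α
  f1b : ∀ x ∈ eigSp F A a 1, ∀ y ∈ eigSp F A a β, x * y ∈ eigSp F A a β
  faa : ∀ x ∈ eigSp F A a α, ∀ y ∈ eigSp F A a α, x * y ∈ eigSp F A a 1 ⊔ eigSp F A a α
  fab : ∀ x ∈ eigSp F A a α, ∀ y ∈ eigSp F A a β, x * y ∈ eigSp F A a β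
  fbb : ∀ x ∈ eigSp F A a β, ∀ y ∈ eigSp F A a β, x * y ∈ eigSp F A a 1 ⊔ eigSp F A a α

/-- A primitive `J(α,β)`-axis: `A_1(a) = F·a`. -/
def IsPrimJAxis (α β : F) (a : A) : Prop :=
  IsJAxis F A α β a ∧ eigSp F A a 1 = Submodule.span F {a}

/-- `A` is a primitive `J(α,β)`-axial algebra: generated as an `F`-algebra by a
set of primitive `J(α,β)`-axes. -/
def IsJAxialAlg (α β : F) : Prop :=
  ∃ S : Set A, (∀ a ∈ S, IsPrimJAxis F A α β a) ∧ NonUnitalAlgebra.adjoin F S = ⊤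

/-- The `(⋆)` condition: for any two primitive axes `a, b`, writing
`b = x • a + bα + bβ`, the projection of `a` onto `A_1(b)` equals `x • b`. -/
def StarCond (α β : F) : Prop :=
  ∀ a b : A, IsPrimJAxis F A α β a → IsPrimJAxis F A α β b →
    ∀ x : F, ∀ bα ∈ eigSp F A a α, ∀ bβ ∈ eigSp F A a β, b = x • a + bα + bβ →
      ∃ aα ∈ eigSp F A b α, ∃ aβ ∈ eigSp F A b β, a = x • b + aα + aβ

/-- A Frobenius form: a nonzero symmetric bilinear form that associates with
the product. -/
def IsFrobenius (B : A →ₗ[F] A →ₗ[F] F) : Prop :=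
  B ≠ 0 ∧ (∀ u v, B u v = B v u) ∧ ∀ u v w, B u (v * w) = B (u * v) w

/-- `τ` is the Miyamoto involution associated to the axis `a`: it fixes
`A_1(a) ⊕ A_α(a)` pointwise and negates `A_β(a)`. -/
def IsMiyamoto (α β : F) (a : A) (τ : A →ₗ[F] A) : Prop :=
  (∀ x ∈ eigSp F A a 1 ⊔ eigSp F A a α, τ x = x) ∧ ∀ x ∈ eigSp F A a β, τ x = -x


/-!
If `w` is a baric character, then both `w` and `B c` are linear forms `φ` with `φ (c * x) = φ x`,
so they vanish on the `α`- and `β`-eigenspaces of `c`; hence both send an axis `d` to its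
coefficient on `c`, and `B c d = w d = 1`.

Conversely, the Miyamoto involution of an axis `c` is an automorphism, so it maps axes to axes;
writing `d = l • c + dα + dβ`, the product `c * d = l • c + α • dα + β • dβ` is then a combination
of `c`, `d` and the image of `d`. So the axes span `A`, the form `B` agrees with
`B x c₀ * B y c₀` everywhere, and associativity of `B` makes `x ↦ B x c₀` multiplicative.
-/

lemma mul_mem_map_of_mul_mem {R M : Type*} [CommSemiring R] [NonUnitalNonAssocSemiring M]
    [Module R M] {e : M ≃ₗ[R] M} (he : ∀ x y, e (x * y) = e x * e y)
    {p q r : Submodule R M} (h : ∀ x ∈ p, ∀ y ∈ q, x * y ∈ r) :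
    ∀ x ∈ p.map (e : M →ₗ[R] M), ∀ y ∈ q.map (e : M →ₗ[R] M),
      x * y ∈ r.map (e : M →ₗ[R] M) := by
  rintro _ ⟨x, hx, rfl⟩ _ ⟨y, hy, rfl⟩
  exact ⟨x * y, h x hx y hy, he x y⟩

lemma involutive_of_eq_self_of_eq_neg {R M : Type*} [Semiring R] [AddCommGroup M] [Module R M]
    {p q : Submodule R M} {τ : M →ₗ[R] M} (hpq : p ⊔ q = ⊤) (hp : ∀ x ∈ p, τ x = x)
    (hq : ∀ x ∈ q, τ x = -x) : Function.Involutive τ := by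
  intro x
  obtain ⟨u, hu, v, hv, rfl⟩ := Submodule.mem_sup.mp (hpq ▸ Submodule.mem_top : x ∈ p ⊔ q)
  rw [map_add, hp u hu, hq v hv, map_add, map_neg, hp u hu, hq v hv, neg_neg]

lemma map_mul_of_eq_self_of_eq_neg {R M : Type*} [Semiring R] [NonUnitalNonAssocCommRing M]
    [Module R M] {p q : Submodule R M} {τ : M →ₗ[R] M} (hpq : p ⊔ q = ⊤)
    (hpp : ∀ x ∈ p, ∀ y ∈ p, x * y ∈ p) (hpq' : ∀ x ∈ p, ∀ y ∈ q, x * y ∈ q)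
    (hqq : ∀ x ∈ q, ∀ y ∈ q, x * y ∈ p) (hp : ∀ x ∈ p, τ x = x)
    (hq : ∀ x ∈ q, τ x = -x) (x y : M) : τ (x * y) = τ x * τ y := by
  obtain ⟨u, hu, v, hv, rfl⟩ := Submodule.mem_sup.mp (hpq ▸ Submodule.mem_top : x ∈ p ⊔ q)
  obtain ⟨u', hu', v', hv', rfl⟩ :=
    Submodule.mem_sup.mp (hpq ▸ Submodule.mem_top : y ∈ p ⊔ q)
  have hvu' : v * u' ∈ q := mul_comm u' v ▸ hpq' u' hu' v hv
  simp only [add_mul, mul_add, map_add, hp _ hu, hp _ hu', hq _ hv, hq _ hv',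
    hp _ (hpp _ hu _ hu'), hq _ (hpq' _ hu _ hv'), hq _ hvu', hp _ (hqq _ hv _ hv'), neg_mul,
    mul_neg]
  abel

lemma LinearMap.apply_eq_mul_of_eq_one_on_span {R M : Type*} [CommSemiring R] [AddCommMonoid M]
    [Module R M] {s : Set M} (hs : Submodule.span R s = ⊤) {B : M →ₗ[R] M →ₗ[R] R}
    (hB : ∀ c ∈ s, ∀ d ∈ s, B c d = 1) {e : M} (he : e ∈ s) (x y : M) :
    B x y = B x e * B y e := by
  have hBe : B = (LinearMap.mul R R).compl₁₂ (B.flip e) (B.flip e) :=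
    ext_on hs fun c hc ↦ ext_on hs fun d hd ↦ by simp [hB c hc d hd, hB c hc e he, hB d hd e he]
  simpa using LinearMap.congr_fun₂ hBe x y

lemma exists_nonUnitalAlgHom_eq_apply_of_factorization {R M : Type*} [CommSemiring R]
    [NonUnitalNonAssocSemiring M] [Module R M] (B : M →ₗ[R] M →ₗ[R] R)
    (hB : ∀ u v w, B u (v * w) = B (u * v) w) {e : M} (he : e * e = e)
    (hfac : ∀ x y, B x y = B x e * B y e) : ∃ w : M →ₙₐ[R] R, ∀ x, w x = B x e :=
  ⟨{ B.flip e with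
      map_zero' := (B.flip e).map_zero
      map_mul' := fun x y ↦ show B (x * y) e = B x e * B y e from
        calc B (x * y) e = B x (y * e) := (hB x y e).symm
          _ = B x e * B y e := by rw [hfac x, ← hB, he] },
    fun _ ↦ rfl⟩

section Axes

variable {F A}
omit [IsScalarTower F A A]

lemma mem_eigSp {a x : A} {l : F} : x ∈ eigSp F A a l ↔ a * x = l • x := Iff.rfl

lemma eigSp_eq_eigenspace (a : A) (l : F) :
    eigSp F A a l = Module.End.eigenspace (LinearMap.mulLeft F a) l := by
  ext x
  rw [Module.End.mem_eigenspace_iff, LinearMap.mulLeft_apply, mem_eigSp]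

lemma disjoint_eigSp_sup_eigSp {α β : F} (hβ1 : β ≠ 1) (hαβ : α ≠ β) (a : A) :
    Disjoint (eigSp F A a 1 ⊔ eigSp F A a α) (eigSp F A a β) := by
  have hβ : β ∉ ({1, α} : Set F) := by simp [hβ1, hαβ.symm]
  simpa only [eigSp_eq_eigenspace, iSup_pair] using
    ((Module.End.eigenspaces_iSupIndep (LinearMap.mulLeft F a)).disjoint_biSup hβ).symm

lemma eigSp_map (e : A ≃ₗ[F] A) (he : ∀ x y, e (x * y) = e x * e y) (a : A) (l : F) :
    eigSp F A (e a) l = (eigSp F A a l).map (e : A →ₗ[F] A) := by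
  ext x
  obtain ⟨y, rfl⟩ := e.surjective x
  rw [Submodule.mem_map_equiv, e.symm_apply_apply, mem_eigSp, mem_eigSp, ← he, ← map_smul,
    e.injective.eq_iff]

lemma apply_eq_zero_of_mem_eigSp (φ : A →ₗ[F] F) {a x : A} {l : F} (hl : l ≠ 1)
    (hx : x ∈ eigSp F A a l) (hφ : φ (a * x) = φ x) : φ x = 0 := by
  rw [mem_eigSp.mp hx, map_smul, smul_eq_mul] at hφ
  have : (l - 1) * φ x = 0 := by rw [sub_mul, hφ, one_mul, sub_self]
  exact (mul_eq_zero.mp this).resolve_left (sub_ne_zero_of_ne hl)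

lemma apply_smul_add_add_eq_mul {α β : F} (hα1 : α ≠ 1) (hβ1 : β ≠ 1) (φ : A →ₗ[F] F)
    {c dα dβ : A} (hφ : ∀ x, φ (c * x) = φ x) (hdα : dα ∈ eigSp F A c α)
    (hdβ : dβ ∈ eigSp F A c β) (l : F) :
    φ (l • c + dα + dβ) = l * φ c := by
  rw [map_add, map_add, map_smul, apply_eq_zero_of_mem_eigSp φ hα1 hdα (hφ dα),
    apply_eq_zero_of_mem_eigSp φ hβ1 hdβ (hφ dβ), smul_eq_mul, add_zero, add_zero]

variable {α β : F} {a : A}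

lemma IsJAxis.mul_mem_sup_of_mem_sup (ha : IsJAxis F A α β a) :
    ∀ x ∈ eigSp F A a 1 ⊔ eigSp F A a α, ∀ y ∈ eigSp F A a 1 ⊔ eigSp F A a α,
      x * y ∈ eigSp F A a 1 ⊔ eigSp F A a α := by
  intro x hx y hy
  obtain ⟨u, hu, v, hv, rfl⟩ := Submodule.mem_sup.mp hx
  obtain ⟨u', hu', v', hv', rfl⟩ := Submodule.mem_sup.mp hy
  rw [add_mul, mul_add, mul_add]
  refine add_mem (add_mem ?_ ?_) (add_mem ?_ ?_)
  · exact Submodule.mem_sup_left (ha.f11 u hu u' hu')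
  · exact Submodule.mem_sup_right (ha.f1a u hu v' hv')
  · exact Submodule.mem_sup_right (mul_comm u' v ▸ ha.f1a u' hu' v hv)
  · exact ha.faa v hv v' hv'

lemma IsJAxis.mul_mem_of_mem_sup (ha : IsJAxis F A α β a) :
    ∀ x ∈ eigSp F A a 1 ⊔ eigSp F A a α, ∀ y ∈ eigSp F A a β, x * y ∈ eigSp F A a β := by
  intro x hx y hy
  obtain ⟨u, hu, v, hv, rfl⟩ := Submodule.mem_sup.mp hx
  rw [add_mul]
  exact add_mem (ha.f1b u hu y hy) (ha.fab v hv y hy)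

lemma IsJAxis.exists_miyamoto (hβ1 : β ≠ 1) (hαβ : α ≠ β) (ha : IsJAxis F A α β a) :
    ∃ τ : A ≃ₗ[F] A, IsMiyamoto F A α β a τ ∧ ∀ x y, τ (x * y) = τ x * τ y := by
  have hc : IsCompl (eigSp F A a 1 ⊔ eigSp F A a α) (eigSp F A a β) :=
    ⟨disjoint_eigSp_sup_eigSp hβ1 hαβ a, codisjoint_iff.mpr ha.decomp⟩
  set τ := LinearMap.ofIsCompl hc (Submodule.subtype _) (-Submodule.subtype _)
  have hp : ∀ x ∈ eigSp F A a 1 ⊔ eigSp F A a α, τ x = x :=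
    fun x hx ↦ LinearMap.ofIsCompl_apply_left hc ⟨x, hx⟩
  have hq : ∀ x ∈ eigSp F A a β, τ x = -x :=
    fun x hx ↦ LinearMap.ofIsCompl_apply_right hc ⟨x, hx⟩
  exact ⟨.ofInvolutive τ (involutive_of_eq_self_of_eq_neg ha.decomp hp hq), ⟨hp, hq⟩,
    map_mul_of_eq_self_of_eq_neg ha.decomp ha.mul_mem_sup_of_mem_sup ha.mul_mem_of_mem_sup
      ha.fbb hp hq⟩

lemma IsJAxis.map {e : A ≃ₗ[F] A} (he : ∀ x y, e (x * y) = e x * e y)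
    (ha : IsJAxis F A α β a) : IsJAxis F A α β (e a) where
  idem := by rw [← he, ha.idem]
  decomp := by
    simp only [eigSp_map e he, ← Submodule.map_sup, ha.decomp, Submodule.map_top,
      LinearEquiv.range]
  f11 := by simpa only [eigSp_map e he] using mul_mem_map_of_mul_mem he ha.f11
  f1a := by simpa only [eigSp_map e he] using mul_mem_map_of_mul_mem he ha.f1a
  f1b := by simpa only [eigSp_map e he] using mul_mem_map_of_mul_mem he ha.f1b
  faa := by
    simpa only [eigSp_map e he, Submodule.map_sup] using mul_mem_map_of_mul_mem he ha.faa
  fab := by simpa only [eigSp_map e he] using mul_mem_map_of_mul_mem he ha.fab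
  fbb := by
    simpa only [eigSp_map e he, Submodule.map_sup] using mul_mem_map_of_mul_mem he ha.fbb

lemma IsPrimJAxis.map {e : A ≃ₗ[F] A} (he : ∀ x y, e (x * y) = e x * e y)
    (ha : IsPrimJAxis F A α β a) : IsPrimJAxis F A α β (e a) :=
  ⟨ha.1.map he, by rw [eigSp_map e he, ha.2, Submodule.map_span, Set.image_singleton]; rfl⟩

lemma IsPrimJAxis.exists_decomp (ha : IsPrimJAxis F A α β a) (d : A) :
    ∃ l : F, ∃ dα ∈ eigSp F A a α, ∃ dβ ∈ eigSp F A a β, d = l • a + dα + dβ := by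
  obtain ⟨e, he, dβ, hdβ, rfl⟩ := Submodule.mem_sup.mp (ha.1.decomp ▸ Submodule.mem_top :
    d ∈ eigSp F A a 1 ⊔ eigSp F A a α ⊔ eigSp F A a β)
  obtain ⟨d₁, hd₁, dα, hdα, rfl⟩ := Submodule.mem_sup.mp he
  obtain ⟨l, rfl⟩ := Submodule.mem_span_singleton.mp (ha.2 ▸ hd₁)
  exact ⟨l, dα, hdα, dβ, hdβ, rfl⟩

end Axes

section Spanning

variable {F A} {α β : F}

lemma span_eq_top_of_mul_mem_span {s : Set A} (hs : NonUnitalAlgebra.adjoin F s = ⊤)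
    (hmul : ∀ c ∈ s, ∀ d ∈ s, c * d ∈ Submodule.span F s) : Submodule.span F s = ⊤ := by
  have hclosed : ∀ x y, x ∈ Submodule.span F s → y ∈ Submodule.span F s →
      x * y ∈ Submodule.span F s := by
    refine fun x y hx hy ↦ (Submodule.map₂_le (f := LinearMap.mul F A)).mp ?_ x hx y hy
    rw [Submodule.map₂_span_span, Submodule.span_le]
    rintro _ ⟨c, hc, d, hd, rfl⟩
    exact hmul c hc d hd
  have hle : NonUnitalAlgebra.adjoin F s ≤ (Submodule.span F s).toNonUnitalSubalgebra hclosed :=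
    NonUnitalAlgebra.adjoin_le Submodule.subset_span
  rw [hs] at hle
  exact eq_top_iff.mpr fun x _ ↦ hle (NonUnitalAlgebra.mem_top (x := x))

omit [IsScalarTower F A A] in
lemma IsPrimJAxis.mul_mem_span (h2 : (2 : F) ≠ 0) (hβ1 : β ≠ 1) (hαβ : α ≠ β) {c d : A}
    (hc : IsPrimJAxis F A α β c) (hd : IsPrimJAxis F A α β d) :
    c * d ∈ Submodule.span F {x | IsPrimJAxis F A α β x} := by
  obtain ⟨l, dα, hdα, dβ, hdβ, rfl⟩ := hc.exists_decomp d
  obtain ⟨τ, ⟨hτ_fix, hτ_neg⟩, hτ⟩ := hc.1.exists_miyamoto hβ1 hαβ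
  simp only [LinearEquiv.coe_coe] at hτ_fix hτ_neg
  have hτd : τ (l • c + dα + dβ) = l • c + dα - dβ := by
    have hc1 : l • c ∈ eigSp F A c 1 :=
      Submodule.smul_mem _ l (by rw [mem_eigSp, one_smul, hc.1.idem])
    rw [map_add, map_add, hτ_fix _ (Submodule.mem_sup_left hc1),
      hτ_fix _ (Submodule.mem_sup_right hdα), hτ_neg _ hdβ, sub_eq_add_neg]
  -- `dα` and `dβ` are recovered from `d` and its Miyamoto image, which is again an axis
  have hcd : (2 : F) • (c * (l • c + dα + dβ)) = (2 * l - 2 * l * α) • c +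
      (α + β) • (l • c + dα + dβ) + (α - β) • τ (l • c + dα + dβ) := by
    rw [hτd, mul_add, mul_add, mul_smul_comm, hc.1.idem, mem_eigSp.mp hdα, mem_eigSp.mp hdβ]
    module
  rw [← inv_smul_smul₀ h2 (c * _), hcd]
  refine Submodule.smul_mem _ _ (add_mem (add_mem ?_ ?_) ?_) <;>
    refine Submodule.smul_mem _ _ (Submodule.subset_span ?_)
  exacts [hc, hd, hd.map hτ]

lemma span_primJAxes_eq_top (h2 : (2 : F) ≠ 0) (hβ1 : β ≠ 1) (hαβ : α ≠ β)
    (hA : IsJAxialAlg F A α β) : Submodule.span F {x | IsPrimJAxis F A α β x} = ⊤ := by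
  obtain ⟨S, hS, hSA⟩ := hA
  refine span_eq_top_of_mul_mem_span (eq_top_iff.mpr ?_)
    fun c hc d hd ↦ IsPrimJAxis.mul_mem_span h2 hβ1 hαβ hc hd
  exact hSA ▸ NonUnitalAlgebra.adjoin_mono hS

end Spanning

theorem baric_iff_form_one (α β : F) (h2 : (2 : F) ≠ 0)
    (hα1 : α ≠ 1) (hβ1 : β ≠ 1) (hαβ : α ≠ β)
    (hA : IsJAxialAlg F A α β)
    (B : A →ₗ[F] A →ₗ[F] F) (hB : IsFrobenius F A B)
    (hBnorm : ∀ c : A, IsPrimJAxis F A α β c → B c c = 1) :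
    (∃ w : A →ₙₐ[F] F, ∀ c : A, IsPrimJAxis F A α β c → w c = 1) ↔
      (∀ c d : A, IsPrimJAxis F A α β c → IsPrimJAxis F A α β d → B c d = 1) := by
  constructor
  · rintro ⟨w, hw⟩ c d hc hd
    obtain ⟨l, dα, hdα, dβ, hdβ, rfl⟩ := hc.exists_decomp d
    have hwd := apply_smul_add_add_eq_mul hα1 hβ1 (w : A →ₗ[F] F)
      (fun x ↦ by simp [hw c hc]) hdα hdβ l
    have hBd := apply_smul_add_add_eq_mul hα1 hβ1 (B c)
      (fun x ↦ by rw [hB.2.2, hc.1.idem]) hdα hdβ l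
    simp only [LinearMap.coe_coe, hw c hc, hw _ hd] at hwd
    rw [hBd, hBnorm c hc, ← hwd]
  · intro hB1
    by_cases hex : ∃ c₀, IsPrimJAxis F A α β c₀
    · obtain ⟨c₀, hc₀⟩ := hex
      obtain ⟨w, hw⟩ := exists_nonUnitalAlgHom_eq_apply_of_factorization B hB.2.2 hc₀.1.idem
        (LinearMap.apply_eq_mul_of_eq_one_on_span (span_primJAxes_eq_top h2 hβ1 hαβ hA)
          (fun c hc d hd ↦ hB1 c d hc hd) hc₀)
      exact ⟨w, fun c hc ↦ (hw c).trans (hB1 c c₀ hc hc₀)⟩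
    · exact ⟨0, fun c hc ↦ (hex ⟨c, hc⟩).elim⟩
end

section
/- Let A be a primitive J(α,β)-axial algebra generated by a finite set S of primitive J(α,β)-axes. For each integer i ≥ 0 let S[i] denote the F-linear span of all elements τ_{a_1}τ_{a_2}⋯τ_{a_l}(b) with 0 ≤ l ≤ i and a_1, …, a_l, b ∈ S. If S[n] = S[n+1] for some n ≥ 1, then A = S[n]. -/
variable (F : Type*) [Field F] (A : Type*) [NonUnitalNonAssocCommRing A]
  [Module F A] [SMulCommClass F A A] [IsScalarTower F A A]

/-- `Sbracket T S i` is the span of all elements `τ_(a_1) ⋯ τ_(a_l) b` with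
`l ≤ i`, `a_1, …, a_l, b ∈ S`, where `T a` is the Miyamoto involution of `a`. -/
def Sbracket (T : A → (A →ₗ[F] A)) (S : Set A) (i : ℕ) : Submodule F A :=
  Submodule.span F
    {x : A | ∃ as : List A, as.length ≤ i ∧ (∀ a ∈ as, a ∈ S) ∧
        ∃ b ∈ S, x = as.foldr (fun a y => T a y) b}

/-!
Since `τ_a S[n] ⊆ S[n+1]` for `a ∈ S`, the hypothesis `S[n] = S[n+1]` makes `S[n]` invariant
under every Miyamoto involution `τ_a`, `a ∈ S`. The map `τ_a` is an involutive algebra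
automorphism (the fusion law is `ℤ/2`-graded), and `a · x` lies in the span of `a`, `x` and
`τ_a x`. Hence left multiplication by `b ∈ S` preserves `S[n]`, and so does left
multiplication by `τ_a w` whenever it does so for `w`, because `τ_a w · y = τ_a (w · τ_a y)`.
Thus `S[n]` is a subalgebra containing `S`, i.e. all of `A`.
-/

section
variable {F A} {T : A → (A →ₗ[F] A)} {S : Set A}
omit [SMulCommClass F A A] [IsScalarTower F A A]

lemma subset_Sbracket (i : ℕ) : S ⊆ Sbracket F A T S i :=
  fun b hb => Submodule.subset_span ⟨[], by simp, by simp, b, hb, rfl⟩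

lemma map_mem_Sbracket_succ {i : ℕ} {a : A} (ha : a ∈ S) {x : A}
    (hx : x ∈ Sbracket F A T S i) : T a x ∈ Sbracket F A T S (i + 1) := by
  refine Submodule.mem_comap.mp ((Submodule.map_le_iff_le_comap.mp ?_) hx)
  rw [Sbracket, Submodule.map_span]
  refine Submodule.span_mono ?_
  rintro _ ⟨_, ⟨as, hl, has, b, hb, rfl⟩, rfl⟩
  refine ⟨a :: as, by simpa using hl, ?_, b, hb, rfl⟩
  rintro c (_ | ⟨_, hc⟩)
  exacts [ha, has c hc]

end

section
variable {F A} {α β : F} {a : A}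
omit [IsScalarTower F A A]

namespace IsJAxis

lemma exists_add_eq (h : IsJAxis F A α β a) (x : A) :
    ∃ xp ∈ eigSp F A a 1 ⊔ eigSp F A a α, ∃ xm ∈ eigSp F A a β, xp + xm = x :=
  Submodule.mem_sup.mp (h.decomp ▸ Submodule.mem_top)

lemma mul_mem_sup (h : IsJAxis F A α β a) {x y : A}
    (hx : x ∈ eigSp F A a 1 ⊔ eigSp F A a α) (hy : y ∈ eigSp F A a 1 ⊔ eigSp F A a α) :
    x * y ∈ eigSp F A a 1 ⊔ eigSp F A a α := by
  obtain ⟨x1, hx1, xa, hxa, rfl⟩ := Submodule.mem_sup.mp hx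
  obtain ⟨y1, hy1, ya, hya, rfl⟩ := Submodule.mem_sup.mp hy
  rw [add_mul, mul_add, mul_add]
  refine add_mem (add_mem ?_ ?_) (add_mem ?_ (h.faa _ hxa _ hya))
  · exact Submodule.mem_sup_left (h.f11 _ hx1 _ hy1)
  · exact Submodule.mem_sup_right (h.f1a _ hx1 _ hya)
  · exact Submodule.mem_sup_right (mul_comm xa y1 ▸ h.f1a _ hy1 _ hxa)

lemma mul_mem_eigSp (h : IsJAxis F A α β a) {x y : A}
    (hx : x ∈ eigSp F A a 1 ⊔ eigSp F A a α) (hy : y ∈ eigSp F A a β) :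
    x * y ∈ eigSp F A a β := by
  obtain ⟨x1, hx1, xa, hxa, rfl⟩ := Submodule.mem_sup.mp hx
  rw [add_mul]
  exact add_mem (h.f1b _ hx1 _ hy) (h.fab _ hxa _ hy)

end IsJAxis

namespace IsMiyamoto
variable {τ : A →ₗ[F] A}

lemma map_add (hM : IsMiyamoto F A α β a τ) {xp xm : A}
    (hp : xp ∈ eigSp F A a 1 ⊔ eigSp F A a α) (hm : xm ∈ eigSp F A a β) :
    τ (xp + xm) = xp - xm := by
  rw [LinearMap.map_add, hM.1 _ hp, hM.2 _ hm, sub_eq_add_neg]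

lemma map_map (hM : IsMiyamoto F A α β a τ) (h : IsJAxis F A α β a) (x : A) :
    τ (τ x) = x := by
  obtain ⟨xp, hp, xm, hm, rfl⟩ := h.exists_add_eq x
  rw [hM.map_add hp hm, sub_eq_add_neg, hM.map_add hp (neg_mem hm), sub_neg_eq_add]

lemma map_mul (hM : IsMiyamoto F A α β a τ) (h : IsJAxis F A α β a) (x y : A) :
    τ (x * y) = τ x * τ y := by
  obtain ⟨xp, hxp, xm, hxm, rfl⟩ := h.exists_add_eq x
  obtain ⟨yp, hyp, ym, hym, rfl⟩ := h.exists_add_eq y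
  have hplus : xp * yp + xm * ym ∈ eigSp F A a 1 ⊔ eigSp F A a α :=
    add_mem (h.mul_mem_sup hxp hyp) (h.fbb _ hxm _ hym)
  have hminus : xp * ym + xm * yp ∈ eigSp F A a β :=
    add_mem (h.mul_mem_eigSp hxp hym) (mul_comm yp xm ▸ h.mul_mem_eigSp hyp hxm)
  have hsplit : (xp + xm) * (yp + ym) = (xp * yp + xm * ym) + (xp * ym + xm * yp) := by
    rw [add_mul, mul_add, mul_add]; abel
  rw [hsplit, hM.map_add hplus hminus, hM.map_add hxp hxm, hM.map_add hyp hym,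
    sub_mul, mul_sub, mul_sub]
  abel

end IsMiyamoto

/-- With `x = λ a + x_α + x_β` one has `a x = λ a + α x_α + β x_β`, and since `2 ≠ 0`, `x` and
`τ x = λ a + x_α - x_β` recover `x_α` and `x_β` modulo `a`. -/
lemma IsPrimJAxis.mul_mem_span_s15 (h2 : (2 : F) ≠ 0) {τ : A →ₗ[F] A}
    (ha : IsPrimJAxis F A α β a) (hM : IsMiyamoto F A α β a τ) (x : A) :
    a * x ∈ Submodule.span F {a, x, τ x} := by
  obtain ⟨x1, h1, xa, hxa, xb, hxb, rfl⟩ : ∃ x1 ∈ eigSp F A a 1, ∃ xa ∈ eigSp F A a α,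
      ∃ xb ∈ eigSp F A a β, x1 + xa + xb = x := by
    obtain ⟨xp, hp, xb, hxb, rfl⟩ := ha.1.exists_add_eq x
    obtain ⟨x1, h1, xa, hxa, rfl⟩ := Submodule.mem_sup.mp hp
    exact ⟨x1, h1, xa, hxa, xb, hxb, rfl⟩
  obtain ⟨l, rfl⟩ := Submodule.mem_span_singleton.mp (ha.2 ▸ h1)
  have hτ : τ (l • a + xa + xb) = l • a + xa - xb :=
    hM.map_add (add_mem (Submodule.mem_sup_left h1) (Submodule.mem_sup_right hxa)) hxb
  have hax : a * (l • a + xa + xb) = (l * (1 - α)) • a + ((α + β) / 2) • (l • a + xa + xb)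
      + ((α - β) / 2) • τ (l • a + xa + xb) := by
    rw [hτ, mul_add, mul_add, mul_smul_comm, ha.1.idem, hxa, hxb]
    match_scalars <;> field_simp <;> ring
  rw [hax]
  refine add_mem (add_mem (Submodule.smul_mem _ _ ?_) (Submodule.smul_mem _ _ ?_))
    (Submodule.smul_mem _ _ ?_) <;> exact Submodule.subset_span (by simp)

lemma mul_mem_of_map_mem {V : Submodule F A} {τ : A →ₗ[F] A}
    (hM : IsMiyamoto F A α β a τ) (ha : IsJAxis F A α β a) (hV : ∀ y ∈ V, τ y ∈ V) {w : A}
    (hw : ∀ y ∈ V, w * y ∈ V) {y : A} (hy : y ∈ V) : τ w * y ∈ V := by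
  have hwy := hV _ (hw _ (hV y hy))
  rwa [hM.map_mul ha, hM.map_map ha] at hwy

lemma foldr_mul_mem (h2 : (2 : F) ≠ 0) {S : Set A} (hSprim : ∀ a ∈ S, IsPrimJAxis F A α β a)
    {T : A → (A →ₗ[F] A)} (hT : ∀ a ∈ S, IsMiyamoto F A α β a (T a))
    {V : Submodule F A} (hSV : S ⊆ V) (hV : ∀ a ∈ S, ∀ y ∈ V, T a y ∈ V)
    {as : List A} (has : ∀ a ∈ as, a ∈ S) {b : A} (hb : b ∈ S) {y : A} (hy : y ∈ V) :
    as.foldr (fun a y => T a y) b * y ∈ V := by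
  induction as generalizing y with
  | nil =>
    refine Submodule.span_le.mpr ?_ ((hSprim b hb).mul_mem_span_s15 h2 (hT b hb) y)
    rintro z (rfl | rfl | rfl)
    exacts [hSV hb, hy, hV b hb y hy]
  | cons a as ih =>
    have ha : a ∈ S := has a List.mem_cons_self
    exact mul_mem_of_map_mem (hT a ha) (hSprim a ha).1 (hV a ha)
      (fun y hy => ih (fun c hc => has c (List.mem_cons_of_mem a hc)) hy) hy

end

variable {F A} in
lemma mul_mem_Sbracket {T : A → (A →ₗ[F] A)} {S : Set A} {α β : F} (h2 : (2 : F) ≠ 0)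
    (hSprim : ∀ a ∈ S, IsPrimJAxis F A α β a) (hT : ∀ a ∈ S, IsMiyamoto F A α β a (T a))
    {n : ℕ} (hstab : Sbracket F A T S n = Sbracket F A T S (n + 1))
    {x y : A} (hx : x ∈ Sbracket F A T S n) (hy : y ∈ Sbracket F A T S n) :
    x * y ∈ Sbracket F A T S n := by
  have hV : ∀ a ∈ S, ∀ y ∈ Sbracket F A T S n, T a y ∈ Sbracket F A T S n :=
    fun a ha y hy => hstab ▸ map_mem_Sbracket_succ ha hy
  refine (Submodule.span_le.mpr ?_ hx : x ∈ (Sbracket F A T S n).comap (LinearMap.mulRight F y))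
  rintro _ ⟨as, -, has, b, hb, rfl⟩
  exact foldr_mul_mem h2 hSprim hT (subset_Sbracket n) hV has hb hy

theorem stabilized_span_is_all (α β : F) (h2 : (2 : F) ≠ 0)
    (S : Set A)
    (hSprim : ∀ a ∈ S, IsPrimJAxis F A α β a)
    (hgen : NonUnitalAlgebra.adjoin F S = ⊤)
    (T : A → (A →ₗ[F] A)) (hT : ∀ a ∈ S, IsMiyamoto F A α β a (T a))
    (n : ℕ)
    (hstab : Sbracket F A T S n = Sbracket F A T S (n + 1)) :
    Sbracket F A T S n = ⊤ := by
  let B := (Sbracket F A T S n).toNonUnitalSubalgebra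
    fun _ _ => mul_mem_Sbracket h2 hSprim hT hstab
  have hB : ⊤ ≤ B := hgen ▸ NonUnitalAlgebra.adjoin_le (subset_Sbracket n)
  exact top_unique fun _ _ => hB NonUnitalAlgebra.mem_top
end
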